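/- For every r ≥ 1 there exists a set of positive integers which is r-Bohr but not (2^{r-1}+1)-Bohr. -/

import Mathlib

/-!
Let `θ` be transcendental and `μ_i = exp (2πi θ^(i+1))`. The set `S` of `n > 0` for which some
`μ_i ^ n` is at distance at least `1/2` from `1` is visibly not `m`-Bohr. If it were not `r`-Bohr,
some Bohr neighbourhood `{n | ∀ j, ‖λ_j ^ n - 1‖ < ε}` would force every `μ_i ^ n` close to `1`.
Averaging `μ ^ n` against the Riesz product `∏ j, ‖1 + λ_j ^ n‖ ^ (2p)`, a nonnegative
trigonometric polynomial concentrated on that neighbourhood, shows that each `μ_i` then lies in the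
group generated by the `λ_j`. Taking arguments, `1, θ, …, θ^(r+1)` would lie in a `ℤ`-module
spanned by `r + 1` reals, contradicting the transcendence of `θ`.
-/

/-- A set of naturals is `r`-Bohr if it is a recurrence set for every product of
`r` rotations of the unit circle. -/
def IsRBohr (r : ℕ) (S : Set ℕ) : Prop :=
  ∀ lam : Fin r → ℂ, (∀ i, ‖lam i‖ = 1) →
    ∀ ε : ℝ, 0 < ε → ∃ n ∈ S, ∀ i, ‖lam i ^ n - 1‖ < ε

open Complex Filter Finset Topology
open scoped Real

theorem tendsto_mean_pow {u : ℂ} (hu : ‖u‖ ≤ 1) :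
    Tendsto (fun N : ℕ => (N : ℝ)⁻¹ • ∑ n ∈ range N, u ^ n) atTop
      (𝓝 (if u = 1 then 1 else 0)) := by
  split_ifs with h
  · subst h
    refine tendsto_const_nhds.congr' ?_
    filter_upwards [eventually_ne_atTop 0] with N hN
    simp [hN]
  · have hbound : ∀ N, ‖∑ n ∈ range N, u ^ n‖ ≤ 2 / ‖u - 1‖ := fun N => by
      rw [geom_sum_eq h, norm_div]
      gcongr
      calc ‖u ^ N - 1‖ ≤ ‖u‖ ^ N + 1 := by simpa using norm_sub_le (u ^ N) 1
        _ ≤ 2 := by linarith [pow_le_one₀ (n := N) (norm_nonneg u) hu]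
    refine squeeze_zero_norm (fun N => ?_)
      (by simpa using (tendsto_inv_atTop_nhds_zero_nat (𝕜 := ℝ)).mul_const (2 / ‖u - 1‖))
    rw [norm_smul, norm_inv, RCLike.norm_natCast]
    gcongr
    exact hbound N

theorem tendsto_mean_sum_mul_pow {ι : Type*} (s : Finset ι) (c χ : ι → ℂ)
    (hχ : ∀ i ∈ s, ‖χ i‖ ≤ 1) :
    Tendsto (fun N : ℕ => (N : ℝ)⁻¹ • ∑ n ∈ range N, ∑ i ∈ s, c i * χ i ^ n) atTop
      (𝓝 (∑ i ∈ s with χ i = 1, c i)) := by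
  have hswap (N : ℕ) : (N : ℝ)⁻¹ • ∑ n ∈ range N, ∑ i ∈ s, c i * χ i ^ n =
      ∑ i ∈ s, c i * ((N : ℝ)⁻¹ • ∑ n ∈ range N, χ i ^ n) := by
    rw [sum_comm, smul_sum]
    simp_rw [← mul_sum, mul_smul_comm]
  simp_rw [hswap, sum_filter]
  refine tendsto_finsetSum _ fun i hi => ?_
  simpa [mul_ite] using (tendsto_mean_pow (hχ i hi)).const_mul (c i)

theorem norm_one_add_sq_of_norm_eq_one {z : ℂ} (hz : ‖z‖ = 1) : ‖1 + z‖ ^ 2 = 4 - ‖z - 1‖ ^ 2 := by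
  have := parallelogram_law_with_norm ℝ (1 : ℂ) z
  rw [norm_sub_rev, norm_one, hz] at this
  linarith

theorem ofReal_norm_one_add_pow_of_norm_eq_one {z : ℂ} (hz : ‖z‖ = 1) (p : ℕ) :
    ((‖1 + z‖ ^ (2 * p) : ℝ) : ℂ) =
      ∑ k ∈ range (2 * p + 1), ((2 * p).choose k : ℂ) * z ^ ((k : ℤ) - p) := by
  have hz0 : z ≠ 0 := norm_ne_zero_iff.mp (by rw [hz]; exact one_ne_zero)
  have hsq : ((‖1 + z‖ : ℝ) : ℂ) ^ 2 = (z + 1) ^ 2 * z ^ (-1 : ℤ) := by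
    rw [← mul_conj', map_add, map_one, ← inv_eq_conj hz, zpow_neg_one]
    field_simp
    ring
  have hpow (k : ℕ) : z ^ k * (z ^ (-1 : ℤ)) ^ p = z ^ ((k : ℤ) - p) := by
    rw [← zpow_natCast, ← zpow_natCast (z ^ (-1 : ℤ)), ← zpow_mul, ← zpow_add₀ hz0]
    ring_nf
  rw [pow_mul, ofReal_pow, ofReal_pow, hsq, mul_pow, ← pow_mul, add_pow, sum_mul]
  refine sum_congr rfl fun k _ => ?_
  rw [one_pow, mul_one, ← hpow]
  ring

section BohrKernel

variable {ι : Type*} [Fintype ι]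

noncomputable def bohrKernel (lam : ι → ℂ) (p n : ℕ) : ℝ := ∏ j, ‖1 + lam j ^ n‖ ^ (2 * p)

def bohrKernelCoeff (p : ℕ) (g : ι → ℕ) : ℝ := ∏ j, ((2 * p).choose (g j) : ℝ)

noncomputable def bohrKernelFreq (lam : ι → ℂ) (p : ℕ) (g : ι → ℕ) : ℂ :=
  ∏ j, lam j ^ ((g j : ℤ) - p)

variable {lam : ι → ℂ} (p : ℕ)

theorem norm_bohrKernelFreq (hlam : ∀ j, ‖lam j‖ = 1) (g : ι → ℕ) :
    ‖bohrKernelFreq lam p g‖ = 1 := by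
  simp [bohrKernelFreq, hlam]

theorem ofReal_bohrKernel [DecidableEq ι] (hlam : ∀ j, ‖lam j‖ = 1) (n : ℕ) :
    (bohrKernel lam p n : ℂ) = ∑ g ∈ Fintype.piFinset fun _ => range (2 * p + 1),
      (bohrKernelCoeff p g : ℂ) * bohrKernelFreq lam p g ^ n := by
  have hlam_n (j : ι) : ‖lam j ^ n‖ = 1 := by rw [norm_pow, hlam, one_pow]
  simp_rw [bohrKernel, ofReal_prod, ofReal_norm_one_add_pow_of_norm_eq_one (hlam_n _),
    prod_univ_sum, bohrKernelCoeff, bohrKernelFreq, ofReal_prod, ← prod_pow, ← prod_mul_distrib]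
  refine sum_congr rfl fun g _ => prod_congr rfl fun j _ => ?_
  rw [← zpow_natCast, ← zpow_natCast, ← zpow_mul, ← zpow_mul, mul_comm (n : ℤ)]
  push_cast
  ring

theorem bohrKernel_le_of_le_norm (hlam : ∀ j, ‖lam j‖ = 1) {ε : ℝ} (hε : 0 ≤ ε) {n : ℕ}
    {j₀ : ι} (hj₀ : ε ≤ ‖lam j₀ ^ n - 1‖) :
    bohrKernel lam p n ≤ (4 ^ Fintype.card ι * (1 - ε ^ 2 / 4)) ^ p := by
  classical
  have hfactor (j : ι) : ‖1 + lam j ^ n‖ ^ 2 ≤ 4 * if j = j₀ then 1 - ε ^ 2 / 4 else 1 := by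
    rw [norm_one_add_sq_of_norm_eq_one (by rw [norm_pow, hlam, one_pow])]
    split_ifs with h
    · subst h; nlinarith
    · nlinarith [norm_nonneg (lam j ^ n - 1)]
  calc bohrKernel lam p n = (∏ j, ‖1 + lam j ^ n‖ ^ 2) ^ p := by
        simp_rw [bohrKernel, pow_mul, prod_pow]
    _ ≤ (∏ j, 4 * if j = j₀ then 1 - ε ^ 2 / 4 else 1) ^ p := by
        gcongr with j
        exact hfactor j
    _ = (4 ^ Fintype.card ι * (1 - ε ^ 2 / 4)) ^ p := by
        rw [prod_mul_distrib, prod_const, prod_ite_eq', if_pos (mem_univ _), card_univ]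

theorem tendsto_mean_bohrKernel_mul_pow [DecidableEq ι] (hlam : ∀ j, ‖lam j‖ = 1) {ν : ℂ}
    (hν : ‖ν‖ ≤ 1) :
    Tendsto (fun N : ℕ => (N : ℝ)⁻¹ • ∑ n ∈ range N, (bohrKernel lam p n : ℂ) * ν ^ n) atTop
      (𝓝 (∑ g ∈ Fintype.piFinset (fun _ => range (2 * p + 1))
        with bohrKernelFreq lam p g * ν = 1, (bohrKernelCoeff p g : ℂ))) := by
  simp_rw [ofReal_bohrKernel p hlam, sum_mul, mul_assoc, ← mul_pow]
  refine tendsto_mean_sum_mul_pow _ _ _ fun g _ => ?_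
  rw [norm_mul, norm_bohrKernelFreq p hlam, one_mul]
  exact hν

theorem centralBinom_pow_le_sum_bohrKernelCoeff [DecidableEq ι] :
    (p.centralBinom : ℝ) ^ Fintype.card ι ≤ ∑ g ∈ Fintype.piFinset (fun _ => range (2 * p + 1))
      with bohrKernelFreq lam p g = 1, bohrKernelCoeff p g := by
  have hmem : (fun _ => p) ∈ {g ∈ Fintype.piFinset (fun _ : ι => range (2 * p + 1)) |
      bohrKernelFreq lam p g = 1} := by
    rw [mem_filter, Fintype.mem_piFinset]
    exact ⟨fun _ => mem_range.mpr (by omega), by simp [bohrKernelFreq]⟩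
  calc (p.centralBinom : ℝ) ^ Fintype.card ι = bohrKernelCoeff p fun _ => p := by
        simp [bohrKernelCoeff, Nat.centralBinom_eq_two_mul_choose]
    _ ≤ _ := single_le_sum (fun g _ => prod_nonneg fun _ _ => Nat.cast_nonneg _) hmem

end BohrKernel

theorem le_of_tendsto_mean_of_le_mul_add {f g : ℕ → ℝ} {a b k c : ℝ}
    (hf : Tendsto (fun N : ℕ => (N : ℝ)⁻¹ • ∑ n ∈ range N, f n) atTop (𝓝 a))
    (hg : Tendsto (fun N : ℕ => (N : ℝ)⁻¹ • ∑ n ∈ range N, g n) atTop (𝓝 b))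
    (h : ∀ n, f n ≤ k * g n + c) : a ≤ k * b + c := by
  refine le_of_tendsto_of_tendsto hf ((hg.const_mul k).add_const c) ?_
  filter_upwards [eventually_ne_atTop 0] with N hN
  calc (N : ℝ)⁻¹ • ∑ n ∈ range N, f n ≤ (N : ℝ)⁻¹ • ∑ n ∈ range N, (k * g n + c) := by
        gcongr with n
        exact h n
    _ = k * ((N : ℝ)⁻¹ • ∑ n ∈ range N, g n) + c := by
        rw [sum_add_distrib, ← mul_sum, sum_const, card_range, nsmul_eq_mul, smul_eq_mul,
          smul_eq_mul]
        field_simp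

theorem le_two_mul_mul_re_add {a η : ℝ} {z : ℂ} (ha : 0 ≤ a) (hη : 0 ≤ η) (hz : ‖z‖ ≤ 1)
    (h : ‖z - 1‖ < 1 / 2 ∨ a ≤ η) : a ≤ 2 * (a * z.re) + 3 * η := by
  have hre := abs_re_le_norm z
  have hre_sub := abs_re_le_norm (z - 1)
  rw [sub_re, one_re] at hre_sub
  rcases h with h | h
  · nlinarith [abs_le.mp (hre_sub.trans h.le)]
  · nlinarith [abs_le.mp (hre.trans hz)]

theorem exists_pow_lt_mul_centralBinom_pow {ρ : ℝ} (hρ0 : 0 ≤ ρ) (hρ1 : ρ < 1) (r : ℕ) {δ : ℝ}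
    (hδ : 0 < δ) : ∃ p : ℕ, (4 ^ r * ρ) ^ p < δ * (p.centralBinom : ℝ) ^ r := by
  obtain ⟨p, hp, hp4⟩ := ((tendsto_pow_const_mul_const_pow_of_abs_lt_one r
    (abs_lt.mpr ⟨by linarith, hρ1⟩)).eventually (gt_mem_nhds hδ)).and
      (eventually_ge_atTop 4) |>.exists
  have h4 : (4 : ℝ) ^ p ≤ p * p.centralBinom := by
    exact_mod_cast (Nat.four_pow_lt_mul_centralBinom p hp4).le
  have hC : (0 : ℝ) < p.centralBinom := by exact_mod_cast p.centralBinom_pos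
  refine ⟨p, ?_⟩
  calc (4 ^ r * ρ) ^ p = (4 ^ p) ^ r * ρ ^ p := by ring
    _ ≤ (p * p.centralBinom) ^ r * ρ ^ p := by gcongr
    _ = (p ^ r * ρ ^ p) * (p.centralBinom : ℝ) ^ r := by ring
    _ < δ * (p.centralBinom : ℝ) ^ r := by gcongr

theorem exists_eq_prod_zpow_of_forall_norm_pow_sub_one_lt {ι : Type*} [Fintype ι] {lam : ι → ℂ}
    (hlam : ∀ j, ‖lam j‖ = 1) {μ : ℂ} (hμ : ‖μ‖ ≤ 1) {ε : ℝ} (hε : 0 < ε)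
    (h : ∀ n : ℕ, (∀ j, ‖lam j ^ n - 1‖ < ε) → ‖μ ^ n - 1‖ < 1 / 2) :
    ∃ m : ι → ℤ, μ = ∏ j, lam j ^ m j := by
  classical
  wlog hε1 : ε ≤ 1 generalizing ε
  · exact this (lt_min hε one_pos) (fun n hn => h n fun j => (hn j).trans_le (min_le_left _ _))
      (min_le_right _ _)
  by_contra! hμ_ne
  set ρ := 1 - ε ^ 2 / 4 with hρ
  have hρ0 : 0 ≤ ρ := by rw [hρ]; nlinarith
  obtain ⟨p, hp⟩ := exists_pow_lt_mul_centralBinom_pow hρ0 (by rw [hρ]; nlinarith) (Fintype.card ι)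
    (by norm_num : (0 : ℝ) < 1 / 3)
  set η := (4 ^ Fintype.card ι * ρ) ^ p
  have hη : 0 ≤ η := by positivity
  -- `μ ^ n` is close to `1` on a Bohr neighbourhood of `lam`, and the kernel is at most `η` off it
  have hpoint (n : ℕ) :
      bohrKernel lam p n ≤ 2 * ((bohrKernel lam p n : ℂ) * μ ^ n).re + 3 * η := by
    rw [re_ofReal_mul]
    refine le_two_mul_mul_re_add (prod_nonneg fun _ _ => by positivity) hη
      (by simpa using pow_le_one₀ (norm_nonneg μ) hμ) ?_
    by_cases hn : ∀ j, ‖lam j ^ n - 1‖ < ε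
    · exact .inl (h n hn)
    · obtain ⟨j, hj⟩ := not_forall.mp hn
      exact .inr (bohrKernel_le_of_le_norm p hlam hε.le (not_lt.mp hj))
  -- no frequency of the kernel cancels `μ`, so the means of the kernel times `μ ^ n` tend to `0`
  have hfreq (g : ι → ℕ) : bohrKernelFreq lam p g * μ ≠ 1 := fun hg => hμ_ne (fun j => p - g j) (by
    rw [eq_inv_of_mul_eq_one_right hg, bohrKernelFreq, ← prod_inv_distrib]
    simp_rw [← zpow_neg, neg_sub])
  have hB := tendsto_mean_bohrKernel_mul_pow p hlam hμ
  rw [filter_false_of_mem fun g _ => hfreq g, sum_empty] at hB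
  have hA := tendsto_mean_bohrKernel_mul_pow p hlam (ν := 1) (by simp)
  simp only [one_pow, mul_one] at hA
  have hA_re := (continuous_re.tendsto _).comp hA
  have hB_re := (continuous_re.tendsto _).comp hB
  simp only [Function.comp_def, smul_re, re_sum, ofReal_re, zero_re] at hA_re hB_re
  have := le_of_tendsto_mean_of_le_mul_add hA_re hB_re hpoint
  have := centralBinom_pow_le_sum_bohrKernelCoeff (lam := lam) p
  linarith

section

open Set Submodule

theorem Transcendental.linearIndependent_pow {R A : Type*} [CommRing R] [CommRing A]
    [Algebra R A] {x : A} (hx : Transcendental R x) : LinearIndependent R (x ^ · : ℕ → A) := by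
  have := (Polynomial.basisMonomials R).linearIndependent.map' (Polynomial.aeval x).toLinearMap
    (LinearMap.ker_eq_bot_of_injective (transcendental_iff_injective.mp hx))
  simpa [Function.comp_def, Polynomial.coe_basisMonomials] using this

theorem Transcendental.exists_pow_notMem_span {R A : Type*} [CommRing R] [Nontrivial R]
    [CommRing A] [Algebra R A] {x : A} (hx : Transcendental R x) {r : ℕ} (u : Fin r → A) :
    ∃ k : Fin (r + 1), x ^ (k + 1 : ℕ) ∉ span R (insert 1 (range u)) := by
  by_contra! h
  set v : Fin (r + 1) → A := Fin.cons 1 u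
  have hpow : span R (range ((x ^ · : ℕ → A) ∘ Fin.val : Fin (r + 2) → A)) ≤ span R (range v) := by
    rw [span_le, Fin.range_cons]
    rintro _ ⟨k, rfl⟩
    induction k using Fin.cases with
    | zero => simpa using subset_span (mem_insert (1 : A) (range u))
    | succ k => exact h k
  have : Module.Finite R (span R (range v)) := .span_of_finite R (finite_range v)
  have hrank := Submodule.finrank_mono hpow
  rw [finrank_span_eq_card (hx.linearIndependent_pow.comp _ Fin.val_injective)] at hrank
  have := finrank_range_le_card (R := R) v
  simp only [Set.finrank, Fintype.card_fin] at hrank this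
  omega

theorem Complex.exists_eq_exp_two_pi_mul_I {z : ℂ} (hz : ‖z‖ = 1) :
    ∃ t : ℝ, z = cexp (2 * π * t * I) :=
  ⟨z.arg / (2 * π), by
    conv_lhs => rw [← norm_mul_exp_arg_mul_I z, hz]
    push_cast
    field_simp⟩

theorem mem_span_of_exp_two_pi_mul_I_eq_prod_zpow {ι : Type*} [Fintype ι] (u : ι → ℝ)
    (m : ι → ℤ) {t : ℝ} (h : cexp (2 * π * t * I) = ∏ j, cexp (2 * π * u j * I) ^ m j) :
    t ∈ span ℤ (insert 1 (range u)) := by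
  simp_rw [← exp_int_mul, ← exp_sum, exp_eq_exp_iff_exists_int] at h
  obtain ⟨k, hk⟩ := h
  have ht : t = ∑ j, m j • u j + k • (1 : ℝ) := by
    have : (2 * π * I : ℂ) * (t - ((∑ j, m j • u j + k • (1 : ℝ) : ℝ) : ℂ)) = 0 := by
      have hsum : ∑ j, (m j : ℂ) * (2 * π * u j * I) = 2 * π * I * ∑ j, (m j : ℂ) * u j := by
        rw [mul_sum]
        exact sum_congr rfl fun _ _ => by ring
      push_cast
      simp_rw [zsmul_eq_mul]
      linear_combination hk + hsum
    exact_mod_cast sub_eq_zero.mp ((mul_eq_zero.mp this).resolve_left two_pi_I_ne_zero)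
  rw [ht]
  exact add_mem
    (sum_mem fun j _ => zsmul_mem (subset_span (mem_insert_of_mem _ (mem_range_self j))) _)
    (zsmul_mem (subset_span (mem_insert _ _)) _)

end

theorem exists_isRBohr_not_bohr {r m : ℕ} (hrm : r < m) :
    ∃ S : Set ℕ, (∀ n ∈ S, 0 < n) ∧ IsRBohr r S ∧
      ∃ (μ : Fin m → ℂ) (δ : ℝ), (∀ i, ‖μ i‖ = 1) ∧ 0 < δ ∧ ∀ n ∈ S, ∃ i, δ ≤ ‖μ i ^ n - 1‖ := by
  set θ := liouvilleNumber 3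
  have hθ : Transcendental ℤ θ := transcendental_liouvilleNumber (by norm_num)
  set μ : Fin m → ℂ := fun i => cexp (2 * π * (θ ^ ((i : ℕ) + 1) : ℝ) * I)
  have hμ (i : Fin m) : ‖μ i‖ = 1 := by
    simpa [μ] using norm_exp_ofReal_mul_I (2 * π * θ ^ ((i : ℕ) + 1))
  refine ⟨{n | 0 < n ∧ ∃ i, 1 / 2 ≤ ‖μ i ^ n - 1‖}, fun n hn => hn.1, ?_,
    μ, 1 / 2, hμ, by norm_num, fun n hn => hn.2⟩
  intro lam hlam ε hε
  by_contra! hS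
  choose u hu using fun j => exists_eq_exp_two_pi_mul_I (hlam j)
  obtain ⟨k, hk⟩ := hθ.exists_pow_notMem_span u
  set i : Fin m := ⟨k, by omega⟩
  have hrec (n : ℕ) (hn : ∀ j, ‖lam j ^ n - 1‖ < ε) : ‖μ i ^ n - 1‖ < 1 / 2 := by
    by_contra! hi
    rcases Nat.eq_zero_or_pos n with rfl | hpos
    · norm_num at hi
    · obtain ⟨j, hj⟩ := hS n ⟨hpos, i, hi⟩
      exact (hn j).not_ge hj
  obtain ⟨m, hm⟩ := exists_eq_prod_zpow_of_forall_norm_pow_sub_one_lt hlam (hμ i).le hε hrec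
  exact hk (mem_span_of_exp_two_pi_mul_I_eq_prod_zpow u m (by rw [funext hu] at hm; exact hm))

theorem stmt_13_general (r : ℕ) :
    ∃ S : Set ℕ, (∀ n ∈ S, 0 < n) ∧ IsRBohr r S ∧
      ∃ (μ : Fin (2 ^ (r - 1) + 1) → ℂ) (δ : ℝ),
        (∀ i, ‖μ i‖ = 1) ∧ 0 < δ ∧
        ∀ n ∈ S, ∃ i, δ ≤ ‖μ i ^ n - 1‖ := by
  refine exists_isRBohr_not_bohr ?_
  have := Nat.lt_two_pow_self (n := r - 1)
  omega

theorem stmt_13 (r : ℕ) (hr : 1 ≤ r) :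
    ∃ S : Set ℕ, (∀ n ∈ S, 0 < n) ∧ IsRBohr r S ∧
      ∃ (μ : Fin (2 ^ (r - 1) + 1) → ℂ) (δ : ℝ),
        (∀ i, ‖μ i‖ = 1) ∧ 0 < δ ∧
        ∀ n ∈ S, ∃ i, δ ≤ ‖μ i ^ n - 1‖ :=
  stmt_13_general r
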